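/- Let L be a positive integer, let X¹, X², Y¹, Y² be finite sets with X¹∩X² = ∅, Y¹∩Y² = ∅ and X¹∪X² = Y¹∪Y² ⊆ [L], let W ⊆ [L] be disjoint from X¹∪X², let B and C be finite sets of integers disjoint from [L] and from each other, and let q be a nonnegative integer. Then (Σ_Z Δ(Z∪X¹∪W∪C)·Δ(B∪Z∪X²∪W)) · Δ(Y¹)·Δ(Y²)·Δ(Y¹,C)·Δ(B,Y²) = (Σ_Z Δ(Z∪Y¹∪W∪C)·Δ(B∪Z∪Y²∪W)) · Δ(X¹)·Δ(X²)·Δ(X¹,C)·Δ(B,X²), where both sums range over all subsets Z ⊆ [L]∖(X¹∪X²∪W) with |Z| = q. -/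
import Mathlib

/-- `Δ(S) = ∏_{s₁,s₂ ∈ S, s₁ < s₂} (s₂ - s₁)`. -/
def Dset (S : Finset ℤ) : ℤ :=
  ∏ x ∈ S, ∏ y ∈ S.filter (fun y => x < y), (y - x)

/-- `Δ(S,T) = ∏_{s ∈ S, t ∈ T} |t - s|`. -/
def Dpair (S T : Finset ℤ) : ℤ :=
  ∏ s ∈ S, ∏ t ∈ T, |t - s|

lemma Dpair_comm (S T : Finset ℤ) : Dpair S T = Dpair T S := by
  unfold Dpair
  rw [Finset.prod_comm]
  exact Finset.prod_congr rfl fun t _ => Finset.prod_congr rfl fun s _ => abs_sub_comm _ _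

lemma Dpair_union_left {S T : Finset ℤ} (U : Finset ℤ) (h : Disjoint S T) :
    Dpair (S ∪ T) U = Dpair S U * Dpair T U := Finset.prod_union h

lemma Dpair_union_right (S : Finset ℤ) {T U : Finset ℤ} (h : Disjoint T U) :
    Dpair S (T ∪ U) = Dpair S T * Dpair S U := by
  unfold Dpair
  rw [← Finset.prod_mul_distrib]
  exact Finset.prod_congr rfl fun s _ => Finset.prod_union h

lemma Dset_union {S T : Finset ℤ} (h : Disjoint S T) :
    Dset (S ∪ T) = Dset S * Dset T * Dpair S T := by
  unfold Dset Dpair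
  rw [Finset.prod_union h]
  have h1 : ∀ x : ℤ, ∏ y ∈ (S ∪ T).filter (fun y => x < y), (y - x) =
      (∏ y ∈ S.filter (fun y => x < y), (y - x)) *
      ∏ y ∈ T.filter (fun y => x < y), (y - x) := fun x => by
    rw [Finset.filter_union, Finset.prod_union (Finset.disjoint_filter_filter h)]
  rw [Finset.prod_congr rfl (fun x _ => h1 x), Finset.prod_congr rfl (fun x _ => h1 x),
    Finset.prod_mul_distrib, Finset.prod_mul_distrib]
  have key : (∏ x ∈ S, ∏ y ∈ T.filter (fun y => x < y), (y - x)) *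
      ∏ x ∈ T, ∏ y ∈ S.filter (fun y => x < y), (y - x) =
      ∏ s ∈ S, ∏ t ∈ T, |t - s| := by
    simp_rw [Finset.prod_filter]
    rw [Finset.prod_comm (s := T)]
    rw [← Finset.prod_mul_distrib]
    refine Finset.prod_congr rfl fun s hs => ?_
    rw [← Finset.prod_mul_distrib]
    refine Finset.prod_congr rfl fun t ht => ?_
    have hne : s ≠ t := fun e => Finset.disjoint_left.mp h hs (e ▸ ht)
    rcases lt_or_gt_of_ne hne with hlt | hgt
    · simp [hlt, not_lt.mpr hlt.le, abs_of_pos (by omega : (0:ℤ) < t - s)]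
    · simp [hgt, not_lt.mpr hgt.le, abs_of_nonpos (by omega : t - s ≤ 0)]
  rw [← key]; ring

lemma keyterm (Z X1 X2 Y1 Y2 W B C : Finset ℤ)
    (hX12 : Disjoint X1 X2) (hY12 : Disjoint Y1 Y2) (hXY : X1 ∪ X2 = Y1 ∪ Y2)
    (hZX1 : Disjoint Z X1) (hZX2 : Disjoint Z X2)
    (hZY1 : Disjoint Z Y1) (hZY2 : Disjoint Z Y2)
    (hZW : Disjoint Z W)
    (hX1W : Disjoint X1 W) (hX2W : Disjoint X2 W)
    (hY1W : Disjoint Y1 W) (hY2W : Disjoint Y2 W)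
    (hZC : Disjoint Z C) (hX1C : Disjoint X1 C) (hY1C : Disjoint Y1 C) (hWC : Disjoint W C)
    (hBZ : Disjoint B Z) (hBX2 : Disjoint B X2) (hBY2 : Disjoint B Y2) (hBW : Disjoint B W) :
    Dset (Z ∪ X1 ∪ W ∪ C) * Dset (B ∪ Z ∪ X2 ∪ W) *
      (Dset Y1 * Dset Y2 * Dpair Y1 C * Dpair B Y2) =
    Dset (Z ∪ Y1 ∪ W ∪ C) * Dset (B ∪ Z ∪ Y2 ∪ W) *
      (Dset X1 * Dset X2 * Dpair X1 C * Dpair B X2) := by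
  have d1 : Disjoint (Z ∪ X1) W := Finset.disjoint_union_left.mpr ⟨hZW, hX1W⟩
  have d1' : Disjoint (Z ∪ Y1) W := Finset.disjoint_union_left.mpr ⟨hZW, hY1W⟩
  have d2 : Disjoint (Z ∪ X1 ∪ W) C :=
    Finset.disjoint_union_left.mpr ⟨Finset.disjoint_union_left.mpr ⟨hZC, hX1C⟩, hWC⟩
  have d2' : Disjoint (Z ∪ Y1 ∪ W) C :=
    Finset.disjoint_union_left.mpr ⟨Finset.disjoint_union_left.mpr ⟨hZC, hY1C⟩, hWC⟩
  have d3 : Disjoint (B ∪ Z) X2 := Finset.disjoint_union_left.mpr ⟨hBX2, hZX2⟩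
  have d3' : Disjoint (B ∪ Z) Y2 := Finset.disjoint_union_left.mpr ⟨hBY2, hZY2⟩
  have d4 : Disjoint (B ∪ Z ∪ X2) W :=
    Finset.disjoint_union_left.mpr ⟨Finset.disjoint_union_left.mpr ⟨hBW, hZW⟩, hX2W⟩
  have d4' : Disjoint (B ∪ Z ∪ Y2) W :=
    Finset.disjoint_union_left.mpr ⟨Finset.disjoint_union_left.mpr ⟨hBW, hZW⟩, hY2W⟩
  have hZc : Dpair Z X1 * Dpair Z X2 = Dpair Z Y1 * Dpair Z Y2 := by
    rw [← Dpair_union_right Z hX12, ← Dpair_union_right Z hY12, hXY]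
  have hWc : Dpair X1 W * Dpair X2 W = Dpair Y1 W * Dpair Y2 W := by
    rw [← Dpair_union_left W hX12, ← Dpair_union_left W hY12, hXY]
  rw [Dset_union d2, Dset_union d1, Dset_union d4, Dset_union d3,
      Dset_union d2', Dset_union d1', Dset_union d4', Dset_union d3',
      Dset_union hZX1, Dset_union hZY1, Dset_union hBZ,
      Dpair_union_left C d1, Dpair_union_left C d1',
      Dpair_union_left C hZX1, Dpair_union_left C hZY1,
      Dpair_union_left W hZX1, Dpair_union_left W hZY1,
      Dpair_union_left W d3, Dpair_union_left W d3', Dpair_union_left W hBZ,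
      Dpair_union_left X2 hBZ, Dpair_union_left Y2 hBZ]
  linear_combination (Dset Z * Dset W * Dset C * Dpair Z W * Dpair Z C * Dpair W C *
      Dset B * Dset Z * Dpair B Z * Dset W * Dpair B W * Dpair Z W *
      (Dset X1 * Dset X2 * Dpair X1 C * Dpair B X2) *
      (Dset Y1 * Dset Y2 * Dpair Y1 C * Dpair B Y2)) *
      ((Dpair X1 W * Dpair X2 W * hZc) + (Dpair Z Y1 * Dpair Z Y2 * hWc))

theorem sum_identity_ferns (L : ℕ) (hL : 0 < L)
    (X1 X2 Y1 Y2 W B C : Finset ℤ) (q : ℕ)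
    (hX12 : Disjoint X1 X2) (hY12 : Disjoint Y1 Y2) (hXY : X1 ∪ X2 = Y1 ∪ Y2)
    (hXL : X1 ∪ X2 ⊆ Finset.Icc (1 : ℤ) L)
    (hWL : W ⊆ Finset.Icc (1 : ℤ) L) (hWX : Disjoint W (X1 ∪ X2))
    (hBL : Disjoint B (Finset.Icc (1 : ℤ) L))
    (hCL : Disjoint C (Finset.Icc (1 : ℤ) L))
    (hBC : Disjoint B C) :
    (∑ Z ∈ Finset.powersetCard q (Finset.Icc (1 : ℤ) L \ (X1 ∪ X2 ∪ W)),
        Dset (Z ∪ X1 ∪ W ∪ C) * Dset (B ∪ Z ∪ X2 ∪ W)) *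
      (Dset Y1 * Dset Y2 * Dpair Y1 C * Dpair B Y2) =
    (∑ Z ∈ Finset.powersetCard q (Finset.Icc (1 : ℤ) L \ (X1 ∪ X2 ∪ W)),
        Dset (Z ∪ Y1 ∪ W ∪ C) * Dset (B ∪ Z ∪ Y2 ∪ W)) *
      (Dset X1 * Dset X2 * Dpair X1 C * Dpair B X2) := by
  rw [Finset.sum_mul, Finset.sum_mul]
  refine Finset.sum_congr rfl fun Z hZ => ?_
  rw [Finset.mem_powersetCard] at hZ
  obtain ⟨hZsub, -⟩ := hZ
  have hZIcc : Z ⊆ Finset.Icc (1 : ℤ) L := hZsub.trans (Finset.sdiff_subset)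
  have hZdis : Disjoint Z (X1 ∪ X2 ∪ W) :=
    (Finset.sdiff_disjoint).mono_left hZsub
  have hX1L : X1 ⊆ Finset.Icc (1 : ℤ) L := (Finset.subset_union_left).trans hXL
  have hX2L : X2 ⊆ Finset.Icc (1 : ℤ) L := (Finset.subset_union_right).trans hXL
  have hYL : Y1 ∪ Y2 ⊆ Finset.Icc (1 : ℤ) L := hXY ▸ hXL
  have hY1L : Y1 ⊆ Finset.Icc (1 : ℤ) L := (Finset.subset_union_left).trans hYL
  have hY2L : Y2 ⊆ Finset.Icc (1 : ℤ) L := (Finset.subset_union_right).trans hYL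
  have hZX1 : Disjoint Z X1 :=
    hZdis.mono_right ((Finset.subset_union_left).trans Finset.subset_union_left)
  have hZX2 : Disjoint Z X2 :=
    hZdis.mono_right ((Finset.subset_union_right).trans Finset.subset_union_left)
  have hZW : Disjoint Z W := hZdis.mono_right Finset.subset_union_right
  have hZXY : Disjoint Z (Y1 ∪ Y2) :=
    hZdis.mono_right (hXY ▸ Finset.subset_union_left)
  have hZY1 : Disjoint Z Y1 := hZXY.mono_right Finset.subset_union_left
  have hZY2 : Disjoint Z Y2 := hZXY.mono_right Finset.subset_union_right
  have hWXY : Disjoint W (Y1 ∪ Y2) := hXY ▸ hWX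
  have hX1W : Disjoint X1 W := (hWX.mono_right Finset.subset_union_left).symm
  have hX2W : Disjoint X2 W := (hWX.mono_right Finset.subset_union_right).symm
  have hY1W : Disjoint Y1 W := (hWXY.mono_right Finset.subset_union_left).symm
  have hY2W : Disjoint Y2 W := (hWXY.mono_right Finset.subset_union_right).symm
  exact keyterm Z X1 X2 Y1 Y2 W B C hX12 hY12 hXY hZX1 hZX2 hZY1 hZY2 hZW
    hX1W hX2W hY1W hY2W
    ((hCL.mono_right hZIcc).symm) ((hCL.mono_right hX1L).symm)
    ((hCL.mono_right hY1L).symm) ((hCL.mono_right hWL).symm)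
    (hBL.mono_right hZIcc) (hBL.mono_right hX2L) (hBL.mono_right hY2L)
    (hBL.mono_right hWL)
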